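/- The invariant c_* is unchanged under G-equivalence: assume g is perfect (g = ⁅g,g⁆) and λ is regular on A'. Let Φ : U(g_λ) → A and Φ' : U(g_λ) → A' be quantum moment maps in enveloping form, and let T : A ≃ A' be an R-algebra isomorphism that is equivariant (T(ρ(X)(a)) = ρ'(X)(T a) for all X ∈ g, a ∈ A). Then Φ' = T ∘ Φ, and consequently for every l in the center of U(g_λ) and every c ∈ R, Φ(l) = c • 1_A implies Φ'(l) = c • 1_{A'}. -/

import Mathlib

noncomputable section

set_option synthInstance.maxHeartbeats 800000
set_option maxHeartbeats 1600000

open scoped TensorProduct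

/-- `R = ℂ[[λ]]`, the ring of formal power series over `ℂ`. -/
abbrev Rl : Type := PowerSeries ℂ

/-- The formal parameter `λ`. -/
def lam : Rl := PowerSeries.X

section GLamConstruction

variable {g : Type*} [LieRing g] [LieAlgebra ℂ g]

private lemma glam_aux_add_lie (x y z : Rl ⊗[ℂ] g) :
    lam • ⁅x + y, z⁆ = lam • ⁅x, z⁆ + lam • ⁅y, z⁆ :=
  (congrArg (lam • ·) (add_lie x y z)).trans (smul_add lam ⁅x, z⁆ ⁅y, z⁆)

private lemma glam_aux_lie_add (x y z : Rl ⊗[ℂ] g) :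
    lam • ⁅x, y + z⁆ = lam • ⁅x, y⁆ + lam • ⁅x, z⁆ :=
  (congrArg (lam • ·) (lie_add x y z)).trans (smul_add lam ⁅x, y⁆ ⁅x, z⁆)

private lemma glam_aux_lie_self (x : Rl ⊗[ℂ] g) : lam • ⁅x, x⁆ = 0 :=
  (congrArg (lam • ·) (lie_self x)).trans (smul_zero lam)

private lemma glam_aux_leibniz (x y z : Rl ⊗[ℂ] g) :
    lam • ⁅x, lam • ⁅y, z⁆⁆ = lam • ⁅lam • ⁅x, y⁆, z⁆ + lam • ⁅y, lam • ⁅x, z⁆⁆ := by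
  have h1 : ⁅x, lam • ⁅y, z⁆⁆ = lam • ⁅x, ⁅y, z⁆⁆ := lie_smul lam x ⁅y, z⁆
  have h2 : ⁅lam • ⁅x, y⁆, z⁆ = lam • ⁅⁅x, y⁆, z⁆ := smul_lie lam ⁅x, y⁆ z
  have h3 : ⁅y, lam • ⁅x, z⁆⁆ = lam • ⁅y, ⁅x, z⁆⁆ := lie_smul lam y ⁅x, z⁆
  have h4 : ⁅x, ⁅y, z⁆⁆ = ⁅⁅x, y⁆, z⁆ + ⁅y, ⁅x, z⁆⁆ := LieRing.leibniz_lie x y z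
  calc lam • ⁅x, lam • ⁅y, z⁆⁆ = lam • (lam • ⁅x, ⁅y, z⁆⁆) := congrArg (lam • ·) h1
    _ = lam • (lam • (⁅⁅x, y⁆, z⁆ + ⁅y, ⁅x, z⁆⁆)) :=
          congrArg (fun w => lam • lam • w) h4
    _ = lam • (lam • ⁅⁅x, y⁆, z⁆ + lam • ⁅y, ⁅x, z⁆⁆) :=
          congrArg (lam • ·) (smul_add lam _ _)
    _ = lam • (lam • ⁅⁅x, y⁆, z⁆) + lam • (lam • ⁅y, ⁅x, z⁆⁆) := smul_add lam _ _
    _ = lam • ⁅lam • ⁅x, y⁆, z⁆ + lam • ⁅y, lam • ⁅x, z⁆⁆ := by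
          rw [← h2]
          exact congrArg (fun w => lam • ⁅lam • ⁅x, y⁆, z⁆ + lam • w) h3.symm

private lemma glam_aux_lie_smul (c : Rl) (x y : Rl ⊗[ℂ] g) :
    lam • ⁅x, c • y⁆ = c • (lam • ⁅x, y⁆) :=
  (congrArg (lam • ·) (lie_smul c x y)).trans (smul_comm lam c ⁅x, y⁆)

end GLamConstruction

variable (g : Type*) [LieRing g] [LieAlgebra ℂ g]

/-- The underlying `R`-module of `g_λ` is the base change `R ⊗_ℂ g`. -/
def GLam : Type _ := Rl ⊗[ℂ] g

variable {g}

/-- The identification `R ⊗_ℂ g → g_λ`. -/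
def GLam.ofT : (Rl ⊗[ℂ] g) → GLam g := id

/-- The identification `g_λ → R ⊗_ℂ g`. -/
def GLam.toT : GLam g → Rl ⊗[ℂ] g := id

instance : AddCommGroup (GLam g) := inferInstanceAs (AddCommGroup (Rl ⊗[ℂ] g))
instance : Module Rl (GLam g) := inferInstanceAs (Module Rl (Rl ⊗[ℂ] g))

/-- The Lie ring structure of `g_λ`: the bracket is the `λ`-multiple of the
base-change bracket, so that `⁅f ⊗ X, h ⊗ Y⁆ = (λ·f·h) ⊗ ⁅X,Y⁆`. -/
instance : LieRing (GLam g) where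
  bracket x y := GLam.ofT (lam • ⁅GLam.toT x, GLam.toT y⁆)
  add_lie x y z := congrArg GLam.ofT (glam_aux_add_lie x.toT y.toT z.toT)
  lie_add x y z := congrArg GLam.ofT (glam_aux_lie_add x.toT y.toT z.toT)
  lie_self x := congrArg GLam.ofT (glam_aux_lie_self x.toT)
  leibniz_lie x y z := congrArg GLam.ofT (glam_aux_leibniz x.toT y.toT z.toT)

/-- `g_λ` is a Lie algebra over `R = ℂ[[λ]]`. -/
instance : LieAlgebra Rl (GLam g) where
  lie_smul c x y := congrArg GLam.ofT (glam_aux_lie_smul c x.toT y.toT)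

/-- On pure tensors the bracket of `g_λ` is `⁅f ⊗ X, h ⊗ Y⁆ = (λ·f·h) ⊗ ⁅X,Y⁆`. -/
lemma GLam.bracket_tmul (f h : Rl) (X Y : g) :
    (⁅GLam.ofT (f ⊗ₜ[ℂ] X), GLam.ofT (h ⊗ₜ[ℂ] Y)⁆ : GLam g)
      = GLam.ofT ((lam * f * h) ⊗ₜ[ℂ] ⁅X, Y⁆) :=
  congrArg GLam.ofT <| by
    have h1 : (⁅f ⊗ₜ[ℂ] X, h ⊗ₜ[ℂ] Y⁆ : Rl ⊗[ℂ] g) = (f * h) ⊗ₜ[ℂ] ⁅X, Y⁆ :=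
      LieAlgebra.ExtendScalars.bracket_tmul ℂ Rl g g f h X Y
    calc lam • (⁅f ⊗ₜ[ℂ] X, h ⊗ₜ[ℂ] Y⁆ : Rl ⊗[ℂ] g)
        = lam • ((f * h) ⊗ₜ[ℂ] ⁅X, Y⁆) := congrArg (lam • ·) h1
      _ = (lam * f * h) ⊗ₜ[ℂ] ⁅X, Y⁆ := by
          rw [TensorProduct.smul_tmul', smul_eq_mul, mul_assoc]

/-- The universal enveloping algebra `U(g_λ)` over `R`. -/
abbrev UEnvLam (g : Type*) [LieRing g] [LieAlgebra ℂ g] : Type _ :=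
  UniversalEnvelopingAlgebra Rl (GLam g)

/-- The canonical map `ι : g → U(g_λ)`, `X ↦ 1 ⊗ X`. -/
def iotaLam (X : g) : UEnvLam g :=
  UniversalEnvelopingAlgebra.ι Rl (GLam.ofT ((1 : Rl) ⊗ₜ[ℂ] X))

/-- `ρ : g → Der(A)` is an action of the `ℂ`-Lie algebra `g` on the `R`-algebra `A`
by `R`-linear derivations, i.e. a `ℂ`-Lie-algebra homomorphism into the Lie algebra
of `R`-linear derivations of `A`. -/
def IsDerAction {g A : Type*} [LieRing g] [LieAlgebra ℂ g]
    [Ring A] [Algebra Rl A] (ρ : g → A →ₗ[Rl] A) : Prop :=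
  (∀ X (a b : A), ρ X (a * b) = ρ X a * b + a * ρ X b) ∧
  (∀ X Y, ρ (X + Y) = ρ X + ρ Y) ∧
  (∀ (c : ℂ) X (a : A), ρ (c • X) a = algebraMap ℂ Rl c • ρ X a) ∧
  (∀ X Y (a : A), ρ ⁅X, Y⁆ a = ρ X (ρ Y a) - ρ Y (ρ X a))

/-- A quantum moment map in enveloping form for `(A, ρ)`: an `R`-algebra
homomorphism `Φ : U(g_λ) → A` with `Φ(ι X)·a − a·Φ(ι X) = λ • ρ(X)(a)`. -/
def IsQMMEnv {g A : Type*} [LieRing g] [LieAlgebra ℂ g]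
    [Ring A] [Algebra Rl A]
    (ρ : g → A →ₗ[Rl] A) (Φ : UEnvLam g →ₐ[Rl] A) : Prop :=
  ∀ (X : g) (a : A), Φ (iotaLam X) * a - a * Φ (iotaLam X) = lam • ρ X a

/-- The invariant `c_*` is unchanged under `G`-equivalence: for a perfect `g`
with `λ` regular on `A'`, an equivariant `R`-algebra isomorphism `T` satisfies
`Φ' = T ∘ Φ`, hence `Φ` and `Φ'` take the same scalar values on the center of
`U(g_λ)`. -/
theorem cstar_invariant_under_G_equivalence
    {g A A' : Type*} [LieRing g] [LieAlgebra ℂ g]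
    [Ring A] [Algebra Rl A] [Ring A'] [Algebra Rl A']
    (hperf : Submodule.span ℂ {z : g | ∃ X Y : g, ⁅X, Y⁆ = z} = ⊤)
    (ρ : g → A →ₗ[Rl] A) (ρ' : g → A' →ₗ[Rl] A')
    (hρ : IsDerAction ρ) (hρ' : IsDerAction ρ')
    (hreg : Function.Injective fun a : A' => lam • a)
    (Φ : UEnvLam g →ₐ[Rl] A) (Φ' : UEnvLam g →ₐ[Rl] A')
    (hΦ : IsQMMEnv ρ Φ) (hΦ' : IsQMMEnv ρ' Φ')
    (T : A ≃ₐ[Rl] A')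
    (hT : ∀ (X : g) (a : A), T (ρ X a) = ρ' X (T a)) :
    (∀ u : UEnvLam g, T (Φ u) = Φ' u) ∧
    (∀ l ∈ Subring.center (UEnvLam g), ∀ c : Rl,
      Φ l = c • (1 : A) → Φ' l = c • (1 : A')) := by
  classical
  letI := LieRing.ofAssociativeRing (A := UEnvLam g)
  letI := LieRing.ofAssociativeRing (A := A')
  -- `ψ = T ∘ Φ`
  set ψ : UEnvLam g →ₐ[Rl] A' := (T : A →ₐ[Rl] A').comp Φ with hψdef
  have hψapp : ∀ u : UEnvLam g, ψ u = T (Φ u) := fun u => rfl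
  -- ψ is also a quantum moment map for ρ'
  have hψι : ∀ (X : g) (a' : A'),
      ψ (iotaLam X) * a' - a' * ψ (iotaLam X) = lam • ρ' X a' := by
    intro X a'
    have h := congrArg T (hΦ X (T.symm a'))
    rw [map_sub, map_mul, map_mul, map_smul, hT, T.apply_symm_apply] at h
    simpa [hψapp] using h
  -- commutator relation in U(g_λ): ⁅ιX, ιY⁆ = λ • ι⁅X,Y⁆
  have hbrac : ∀ X Y : g,
      iotaLam X * iotaLam Y - iotaLam Y * iotaLam X
        = lam • iotaLam (⁅X, Y⁆ : g) := by
    intro X Y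
    have h1 : (⁅GLam.ofT ((1:Rl) ⊗ₜ[ℂ] X), GLam.ofT ((1:Rl) ⊗ₜ[ℂ] Y)⁆ : GLam g)
        = lam • GLam.ofT ((1:Rl) ⊗ₜ[ℂ] (⁅X, Y⁆ : g)) := by
      rw [GLam.bracket_tmul]
      show ((lam * 1 * 1) ⊗ₜ[ℂ] (⁅X, Y⁆ : g) : Rl ⊗[ℂ] g)
          = lam • ((1:Rl) ⊗ₜ[ℂ] (⁅X, Y⁆ : g))
      rw [TensorProduct.smul_tmul', smul_eq_mul, mul_one, mul_one]
    have h2 := (UniversalEnvelopingAlgebra.ι Rl (L := GLam g)).map_lie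
        (GLam.ofT ((1:Rl) ⊗ₜ[ℂ] X)) (GLam.ofT ((1:Rl) ⊗ₜ[ℂ] Y))
    rw [h1, map_smul (UniversalEnvelopingAlgebra.ι Rl (L := GLam g))] at h2
    calc iotaLam X * iotaLam Y - iotaLam Y * iotaLam X
        = ⁅iotaLam X, iotaLam Y⁆ := (Ring.lie_def _ _).symm
      _ = lam • iotaLam (⁅X, Y⁆ : g) := h2.symm
  -- ψ and Φ' agree on ι of brackets
  have hkey : ∀ X Y : g, ψ (iotaLam (⁅X, Y⁆ : g)) = Φ' (iotaLam (⁅X, Y⁆ : g)) := by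
    intro X Y
    apply hreg
    show lam • ψ (iotaLam ⁅X, Y⁆) = lam • Φ' (iotaLam ⁅X, Y⁆)
    have e1 : lam • ψ (iotaLam ⁅X, Y⁆)
        = ψ (iotaLam X) * ψ (iotaLam Y) - ψ (iotaLam Y) * ψ (iotaLam X) := by
      rw [← map_smul, ← hbrac, map_sub, map_mul, map_mul]
    have e2 : lam • Φ' (iotaLam ⁅X, Y⁆)
        = Φ' (iotaLam X) * Φ' (iotaLam Y) - Φ' (iotaLam Y) * Φ' (iotaLam X) := by
      rw [← map_smul, ← hbrac, map_sub, map_mul, map_mul]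
    rw [e1, e2]
    have h3 : ψ (iotaLam X) * ψ (iotaLam Y) - ψ (iotaLam Y) * ψ (iotaLam X)
        = lam • ρ' X (ψ (iotaLam Y)) := hψι X (ψ (iotaLam Y))
    have h4 : Φ' (iotaLam X) * ψ (iotaLam Y) - ψ (iotaLam Y) * Φ' (iotaLam X)
        = lam • ρ' X (ψ (iotaLam Y)) := hΦ' X (ψ (iotaLam Y))
    have h5 : ψ (iotaLam Y) * Φ' (iotaLam X) - Φ' (iotaLam X) * ψ (iotaLam Y)
        = lam • ρ' Y (Φ' (iotaLam X)) := hψι Y (Φ' (iotaLam X))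
    have h6 : Φ' (iotaLam Y) * Φ' (iotaLam X) - Φ' (iotaLam X) * Φ' (iotaLam Y)
        = lam • ρ' Y (Φ' (iotaLam X)) := hΦ' Y (Φ' (iotaLam X))
    have h7 := h3.trans h4.symm
    have h8 := h5.trans h6.symm
    rw [h7]
    rw [sub_eq_sub_iff_sub_eq_sub] at h8 ⊢
    exact h8.symm
  -- basic identities for iotaLam
  have hiota_add : ∀ X Y : g, iotaLam (X + Y) = iotaLam X + iotaLam Y := by
    intro X Y
    unfold iotaLam
    rw [show (GLam.ofT ((1:Rl) ⊗ₜ[ℂ] (X + Y)) : GLam g)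
        = GLam.ofT ((1:Rl) ⊗ₜ[ℂ] X) + GLam.ofT ((1:Rl) ⊗ₜ[ℂ] Y) from
      congrArg GLam.ofT (TensorProduct.tmul_add _ X Y), map_add (UniversalEnvelopingAlgebra.ι Rl (L := GLam g))]
  have hι0 : (UniversalEnvelopingAlgebra.ι Rl (L := GLam g)) 0 = 0 := by
    have h := map_smul (UniversalEnvelopingAlgebra.ι Rl (L := GLam g)) (0:Rl) 0
    rw [zero_smul, zero_smul] at h
    exact h
  have hiota_zero : iotaLam (0 : g) = 0 := by
    unfold iotaLam
    rw [show (GLam.ofT ((1:Rl) ⊗ₜ[ℂ] (0:g)) : GLam g) = 0 from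
      congrArg GLam.ofT (TensorProduct.tmul_zero _ (1:Rl)), hι0]
  have hiota_smul : ∀ (c : ℂ) (X : g),
      iotaLam (c • X) = algebraMap ℂ Rl c • iotaLam X := by
    intro c X
    unfold iotaLam
    rw [show (GLam.ofT ((1:Rl) ⊗ₜ[ℂ] (c • X)) : GLam g)
        = algebraMap ℂ Rl c • GLam.ofT ((1:Rl) ⊗ₜ[ℂ] X) from (by
        show ((1:Rl) ⊗ₜ[ℂ] (c • X) : Rl ⊗[ℂ] g)
            = algebraMap ℂ Rl c • ((1:Rl) ⊗ₜ[ℂ] X)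
        rw [TensorProduct.tmul_smul, algebraMap_smul]), map_smul (UniversalEnvelopingAlgebra.ι Rl (L := GLam g))]
  -- ψ and Φ' agree on ι of all of g, by perfectness
  have hall : ∀ X : g, ψ (iotaLam X) = Φ' (iotaLam X) := by
    intro X
    have hX : X ∈ Submodule.span ℂ {z : g | ∃ X Y : g, ⁅X, Y⁆ = z} := by
      rw [hperf]; trivial
    refine Submodule.span_induction ?_ ?_ ?_ ?_ hX
    · rintro z ⟨X, Y, rfl⟩; exact hkey X Y
    · rw [hiota_zero, map_zero, map_zero]
    · intro x y _ _ hx hy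
      rw [hiota_add, map_add, map_add, hx, hy]
    · intro c x _ hx
      rw [hiota_smul, map_smul, map_smul, hx]
  -- hence on ι of all of g_λ
  have hten : ∀ t : Rl ⊗[ℂ] g,
      ψ (UniversalEnvelopingAlgebra.ι Rl (GLam.ofT t))
        = Φ' (UniversalEnvelopingAlgebra.ι Rl (GLam.ofT t)) := by
    intro t
    induction t with
    | zero =>
        rw [show (GLam.ofT (0 : Rl ⊗[ℂ] g) : GLam g) = 0 from rfl, hι0,
          map_zero, map_zero]
    | tmul f X =>
        have : (GLam.ofT (f ⊗ₜ[ℂ] X) : GLam g) = f • GLam.ofT ((1:Rl) ⊗ₜ[ℂ] X) := by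
          show (f ⊗ₜ[ℂ] X : Rl ⊗[ℂ] g) = f • ((1:Rl) ⊗ₜ[ℂ] X)
          rw [TensorProduct.smul_tmul', smul_eq_mul, mul_one]
        rw [this, map_smul (UniversalEnvelopingAlgebra.ι Rl (L := GLam g)), map_smul, map_smul]
        exact congrArg (f • ·) (hall X)
    | add x y hx hy =>
        rw [show (GLam.ofT (x + y) : GLam g) = GLam.ofT x + GLam.ofT y from rfl,
          map_add (UniversalEnvelopingAlgebra.ι Rl (L := GLam g)), map_add, map_add, hx, hy]
  have hhom : ψ = Φ' := by
    apply UniversalEnvelopingAlgebra.hom_ext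
    apply LieHom.ext
    intro z
    exact hten (GLam.toT z)
  have part1 : ∀ u : UEnvLam g, T (Φ u) = Φ' u := fun u =>
    (hψapp u).symm.trans (congrArg (fun F : UEnvLam g →ₐ[Rl] A' => F u) hhom)
  refine ⟨part1, ?_⟩
  intro l _ c hc
  rw [← part1 l, hc, map_smul, map_one]
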